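/- Let n, m ≥ 1, let ξ̂ ∈ ℝ^{n+1}, let Ω̂ ∈ ℝ^{(n+1)×(n+1)} be positive definite with decomposition Ω̂ = D_{Ω̂} Ω̂̄ D_{Ω̂}, let W ∈ ℝ^{m×n}, and set Ŵ := [W | 0] ∈ ℝ^{m×(n+1)} (i.e., W with an appended zero column). Write ξ ∈ ℝⁿ for the first n entries of ξ̂ and Ω ∈ ℝ^{n×n} for the upper-left n×n block of Ω̂. Then for every ĝ ∈ ℝ^{n+1}, Φ_m(Ŵ ĝ) · φ_{n+1}(ĝ − ξ̂; Ω̂) = Φ_m(W ξ; W Ω Wᵀ + I_m) · sun(ĝ), where sun is the SUN_{n+1,m}(ξ̂, Ω̂, Ω̂̄ D_{Ω̂} Ŵᵀ, W ξ, W Ω Wᵀ + I_m) density. That is, the joint posterior of the latent function values at the n training points and one test point under the affine probit likelihood is a unified skew-normal whose skewness matrix Ω̂̄ D_{Ω̂} Ŵᵀ has last row Ω̂_{n+1,1:n} Wᵀ / √(Ω̂_{n+1,n+1}), and whose parameters γ = W ξ and Γ = W Ω Wᵀ + I_m do not depend on the test point. -/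

import Mathlib

open MeasureTheory Real Matrix

/-- Centered multivariate normal density with covariance `S`. -/
noncomputable def gaussPdf {ι : Type*} [Fintype ι] [DecidableEq ι]
    (S : Matrix ι ι ℝ) (x : ι → ℝ) : ℝ :=
  (2 * π) ^ (-(Fintype.card ι : ℝ) / 2) * S.det ^ (-(1 : ℝ) / 2) *
    Real.exp (-(1 / 2) * (x ⬝ᵥ S⁻¹.mulVec x))

/-- Centered multivariate normal CDF with covariance `S`, evaluated at `a`. -/
noncomputable def gaussCdf {ι : Type*} [Fintype ι] [DecidableEq ι]
    (S : Matrix ι ι ℝ) (a : ι → ℝ) : ℝ :=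
  ∫ t in {t : ι → ℝ | ∀ i, t i ≤ a i}, gaussPdf S t

/-- `D_Ω`: diagonal matrix of square roots of the diagonal of `Ω`. -/
noncomputable def matD {ι : Type*} [Fintype ι] [DecidableEq ι]
    (Ω : Matrix ι ι ℝ) : Matrix ι ι ℝ :=
  Matrix.diagonal fun i => Real.sqrt (Ω i i)

/-- `Ω̄`: the correlation matrix of `Ω`, so that `Ω = D_Ω Ω̄ D_Ω`. -/
noncomputable def matCorr {ι : Type*} [Fintype ι] [DecidableEq ι]
    (Ω : Matrix ι ι ℝ) : Matrix ι ι ℝ :=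
  (matD Ω)⁻¹ * Ω * (matD Ω)⁻¹

/-- Unified skew-normal `SUN(ξ, Ω, Δ, γ, Γ)` density. -/
noncomputable def sunPdf {ι κ : Type*} [Fintype ι] [DecidableEq ι] [Fintype κ] [DecidableEq κ]
    (ξ : ι → ℝ) (Ω : Matrix ι ι ℝ) (Δ : Matrix ι κ ℝ) (γ : κ → ℝ) (Γ : Matrix κ κ ℝ)
    (z : ι → ℝ) : ℝ :=
  gaussPdf Ω (z - ξ) *
    gaussCdf (Γ - Δᵀ * (matCorr Ω)⁻¹ * Δ)
      (γ + (Δᵀ * (matCorr Ω)⁻¹ * (matD Ω)⁻¹).mulVec (z - ξ)) /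
  gaussCdf Γ γ

/-- Standard univariate normal CDF `Φ₁`. -/
noncomputable def stdNormalCdf (a : ℝ) : ℝ :=
  ∫ t in Set.Iic a, (2 * π) ^ (-(1 : ℝ) / 2) * Real.exp (-(t ^ 2) / 2)

/-- `[W | 0]`: append a zero column (in the last position) to `W`. -/
noncomputable def appendZeroCol {m n : ℕ} (W : Matrix (Fin m) (Fin n) ℝ) :
    Matrix (Fin m) (Fin (n + 1)) ℝ :=
  Matrix.of fun k j => Fin.lastCases (0 : ℝ) (fun i => W k i) j

/-
The skewness matrix `Δ = Ω̄ D_Ω Aᵀ` is chosen so that `Δᵀ Ω̄⁻¹ = A D_Ω`. Hence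
`Δᵀ Ω̄⁻¹ D_Ω⁻¹ = A` and `Γ - Δᵀ Ω̄⁻¹ Δ = Λ` when `Γ = A Ω Aᵀ + Λ`, so the SUN density with
`γ = A ξ` collapses to `φ(z - ξ; Ω) Φ(A z; Λ) / Φ(A ξ; Γ)`: it is the probit posterior up to the
normalizing constant `Φ(A ξ; Γ)`, which is positive because the Gaussian density is positive and
integrable. For `A = [W | 0]` the last coordinate drops out: `A Ω̂ Aᵀ = W Ω Wᵀ` and `A ξ̂ = W ξ`.
-/

theorem exists_pos_mul_norm_sq_le {E : Type*} [NormedAddCommGroup E] [NormedSpace ℝ E]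
    [ProperSpace E] {q : E → ℝ} (hq : Continuous q) (hsmul : ∀ (c : ℝ) x, q (c • x) = c ^ 2 * q x)
    (hpos : ∀ x ≠ 0, 0 < q x) : ∃ ε > 0, ∀ x, ε * ‖x‖ ^ 2 ≤ q x := by
  have hq0 : q 0 = 0 := by simpa using hsmul 0 0
  rcases subsingleton_or_nontrivial E with hE | hE
  · exact ⟨1, one_pos, fun x => by simp [Subsingleton.elim x 0, hq0]⟩
  obtain ⟨x₀, hx₀, hmin⟩ := (isCompact_sphere (0 : E) 1).exists_isMinOn
    (NormedSpace.sphere_nonempty.2 zero_le_one) hq.continuousOn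
  refine ⟨q x₀, hpos x₀ (ne_zero_of_mem_unit_sphere ⟨x₀, hx₀⟩), fun x => ?_⟩
  rcases eq_or_ne x 0 with rfl | hx
  · simp [hq0]
  have hx' : ‖x‖ ≠ 0 := norm_ne_zero_iff.2 hx
  calc q x₀ * ‖x‖ ^ 2 ≤ q (‖x‖⁻¹ • x) * ‖x‖ ^ 2 :=
        mul_le_mul_of_nonneg_right (hmin (by simp [norm_smul, hx'])) (by positivity)
    _ = q x := by rw [hsmul]; field_simp

namespace Matrix.PosDef

variable {ι : Type*} [Fintype ι]

theorem exists_pos_mul_sum_sq_le {M : Matrix ι ι ℝ} (hM : M.PosDef) :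
    ∃ ε > 0, ∀ x : ι → ℝ, ε * ∑ i, x i ^ 2 ≤ x ⬝ᵥ M *ᵥ x := by
  obtain ⟨ε, hε, hle⟩ := exists_pos_mul_norm_sq_le
    (q := fun y : EuclideanSpace ℝ ι => y.ofLp ⬝ᵥ M *ᵥ y.ofLp) (by fun_prop)
    (fun c y => by simp only [WithLp.ofLp_smul, mulVec_smul, dotProduct_smul, smul_dotProduct,
      smul_eq_mul]; ring)
    (fun y hy => by simpa using hM.dotProduct_mulVec_pos ((WithLp.ofLp_injective 2).ne hy))
  refine ⟨ε, hε, fun x => ?_⟩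
  simpa [EuclideanSpace.real_norm_sq_eq] using hle (WithLp.toLp 2 x)

end Matrix.PosDef

section Gaussian

variable {ι : Type*} [Fintype ι] [DecidableEq ι] {S : Matrix ι ι ℝ}

theorem gaussPdf_pos (hS : S.PosDef) (x : ι → ℝ) : 0 < gaussPdf S x := by
  unfold gaussPdf
  have := hS.det_pos
  positivity

theorem continuous_gaussPdf (S : Matrix ι ι ℝ) : Continuous (gaussPdf S) := by
  unfold gaussPdf
  fun_prop

theorem integrable_gaussPdf (hS : S.PosDef) : Integrable (gaussPdf S) := by
  obtain ⟨ε, hε, hquad⟩ := hS.inv.exists_pos_mul_sum_sq_le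
  have hprod : Integrable fun x : ι → ℝ => ∏ i, exp (-(ε / 2) * x i ^ 2) :=
    Integrable.fintype_prod (f := fun _ t => exp (-(ε / 2) * t ^ 2))
      fun _ => integrable_exp_neg_mul_sq (by positivity)
  have hexp : Integrable fun x : ι → ℝ => exp (-(ε / 2) * ∑ i, x i ^ 2) := by
    simpa only [Finset.mul_sum, exp_sum] using hprod
  refine (hexp.const_mul ((2 * π) ^ (-(Fintype.card ι : ℝ) / 2) * S.det ^ (-(1 : ℝ) / 2))).mono'
    (continuous_gaussPdf S).aestronglyMeasurable (Filter.Eventually.of_forall fun x => ?_)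
  rw [norm_of_nonneg (gaussPdf_pos hS x).le, gaussPdf]
  have := hS.det_pos
  refine mul_le_mul_of_nonneg_left (exp_le_exp.2 ?_) (by positivity)
  nlinarith [hquad x, Finset.sum_nonneg fun i (_ : i ∈ Finset.univ) => sq_nonneg (x i)]

theorem gaussCdf_pos (hS : S.PosDef) (a : ι → ℝ) : 0 < gaussCdf S a := by
  have hbox : {t : ι → ℝ | ∀ i, t i ≤ a i} = Set.univ.pi fun i => Set.Iic (a i) := by
    ext t; simp [Pi.le_def]
  rw [gaussCdf, setIntegral_pos_iff_support_of_nonneg_ae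
    (ae_of_all _ fun x => (gaussPdf_pos hS x).le) (integrable_gaussPdf hS).integrableOn,
    Function.support_eq_univ fun x => (gaussPdf_pos hS x).ne', Set.univ_inter, hbox,
    volume_pi_pi]
  simpa only [Real.volume_Iic, Finset.prod_const, Finset.card_univ] using
    pos_iff_ne_zero.2 (pow_ne_zero _ ENNReal.top_ne_zero)

end Gaussian

section SkewNormal

variable {ι κ : Type*} [Fintype ι] [DecidableEq ι] {Ω : Matrix ι ι ℝ}

theorem isUnit_det_matD (hΩ : Ω.PosDef) : IsUnit (matD Ω).det := by
  rw [matD, det_diagonal]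
  exact (Finset.prod_pos fun i _ => sqrt_pos.2 hΩ.diag_pos).ne'.isUnit

theorem transpose_inv_matD (Ω : Matrix ι ι ℝ) : (matD Ω)⁻¹ᵀ = (matD Ω)⁻¹ := by
  rw [transpose_nonsing_inv, matD, diagonal_transpose]

theorem matCorr_mul_matD (hΩ : Ω.PosDef) : matCorr Ω * matD Ω = (matD Ω)⁻¹ * Ω := by
  rw [matCorr, nonsing_inv_mul_cancel_right _ _ (isUnit_det_matD hΩ)]

theorem inv_matCorr (hΩ : Ω.PosDef) : (matCorr Ω)⁻¹ = matD Ω * Ω⁻¹ * matD Ω := by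
  rw [matCorr, Matrix.mul_inv_rev, Matrix.mul_inv_rev,
    nonsing_inv_nonsing_inv _ (isUnit_det_matD hΩ), Matrix.mul_assoc]

theorem inv_matD (hΩ : Ω.PosDef) : (matD Ω)⁻¹ = diagonal fun i => (√(Ω i i))⁻¹ := by
  refine inv_eq_left_inv ?_
  rw [matD, diagonal_mul_diagonal, ← diagonal_one]
  exact congrArg diagonal (funext fun i => inv_mul_cancel₀ (sqrt_pos.2 hΩ.diag_pos).ne')

theorem matCorr_mul_matD_mul_apply (hΩ : Ω.PosDef) (B : Matrix ι κ ℝ) (i : ι) (k : κ) :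
    (matCorr Ω * matD Ω * B) i k = (Ω * B) i k / √(Ω i i) := by
  rw [matCorr_mul_matD hΩ, Matrix.mul_assoc, inv_matD hΩ, diagonal_mul, div_eq_inv_mul]

theorem transpose_matCorr_mul_matD_mul_transpose_mul_inv (hΩ : Ω.PosDef) (A : Matrix κ ι ℝ) :
    (matCorr Ω * matD Ω * Aᵀ)ᵀ * (matCorr Ω)⁻¹ = A * matD Ω := by
  have hD := isUnit_det_matD hΩ
  have hΩ' : IsUnit Ω.det := hΩ.det_pos.ne'.isUnit
  rw [matCorr_mul_matD hΩ, inv_matCorr hΩ, transpose_mul, transpose_mul, transpose_transpose,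
    transpose_inv_matD, (isHermitian_iff_isSymm.1 hΩ.isHermitian).eq]
  simp only [Matrix.mul_assoc, nonsing_inv_mul_cancel_left _ _ hD,
    mul_nonsing_inv_cancel_left _ _ hΩ']

theorem sunPdf_matCorr_mul_matD_mul_transpose [Fintype κ] [DecidableEq κ] (hΩ : Ω.PosDef)
    (A : Matrix κ ι ℝ) (Λ : Matrix κ κ ℝ) (ξ z : ι → ℝ) :
    sunPdf ξ Ω (matCorr Ω * matD Ω * Aᵀ) (A *ᵥ ξ) (A * Ω * Aᵀ + Λ) z =
      gaussPdf Ω (z - ξ) * gaussCdf Λ (A *ᵥ z) / gaussCdf (A * Ω * Aᵀ + Λ) (A *ᵥ ξ) := by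
  have hD := isUnit_det_matD hΩ
  have hΓ : (matCorr Ω * matD Ω * Aᵀ)ᵀ * (matCorr Ω)⁻¹ * (matCorr Ω * matD Ω * Aᵀ) =
      A * Ω * Aᵀ := by
    rw [transpose_matCorr_mul_matD_mul_transpose_mul_inv hΩ, matCorr_mul_matD hΩ]
    simp only [Matrix.mul_assoc, mul_nonsing_inv_cancel_left _ _ hD]
  have hγ : (matCorr Ω * matD Ω * Aᵀ)ᵀ * (matCorr Ω)⁻¹ * (matD Ω)⁻¹ = A := by
    rw [transpose_matCorr_mul_matD_mul_transpose_mul_inv hΩ, mul_nonsing_inv_cancel_right _ _ hD]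
  rw [sunPdf, hΓ, hγ, add_sub_cancel_left, mulVec_sub, add_sub_cancel]

theorem gaussCdf_mulVec_mul_gaussPdf_eq_mul_sunPdf [Fintype κ] [DecidableEq κ] (hΩ : Ω.PosDef)
    (A : Matrix κ ι ℝ) {Λ : Matrix κ κ ℝ} (hΛ : Λ.PosDef) (ξ z : ι → ℝ) :
    gaussCdf Λ (A *ᵥ z) * gaussPdf Ω (z - ξ) =
      gaussCdf (A * Ω * Aᵀ + Λ) (A *ᵥ ξ) *
        sunPdf ξ Ω (matCorr Ω * matD Ω * Aᵀ) (A *ᵥ ξ) (A * Ω * Aᵀ + Λ) z := by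
  have hΓ : (A * Ω * Aᵀ + Λ).PosDef := by
    refine PosDef.posSemidef_add ?_ hΛ
    simpa only [conjTranspose_eq_transpose_of_trivial] using
      hΩ.posSemidef.mul_mul_conjTranspose_same A
  rw [sunPdf_matCorr_mul_matD_mul_transpose hΩ, mul_div_cancel₀ _ (gaussCdf_pos hΓ _).ne',
    mul_comm]

end SkewNormal

section AppendZeroCol

variable {m n : ℕ} (W : Matrix (Fin m) (Fin n) ℝ)

theorem appendZeroCol_mul {α : Type*} (M : Matrix (Fin (n + 1)) α ℝ) :
    appendZeroCol W * M = W * M.submatrix Fin.castSucc id := by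
  ext k j
  simp [mul_apply, appendZeroCol, Fin.sum_univ_castSucc]

theorem mul_transpose_appendZeroCol {α : Type*} (M : Matrix α (Fin (n + 1)) ℝ) :
    M * (appendZeroCol W)ᵀ = M.submatrix id Fin.castSucc * Wᵀ := by
  rw [← transpose_transpose M, ← transpose_mul, appendZeroCol_mul, transpose_mul,
    transpose_submatrix, transpose_transpose]

theorem appendZeroCol_mul_mul_transpose (M : Matrix (Fin (n + 1)) (Fin (n + 1)) ℝ) :
    appendZeroCol W * M * (appendZeroCol W)ᵀ =
      W * M.submatrix Fin.castSucc Fin.castSucc * Wᵀ := by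
  rw [Matrix.mul_assoc, mul_transpose_appendZeroCol, ← Matrix.mul_assoc, appendZeroCol_mul,
    submatrix_submatrix, Function.id_comp, Function.comp_id]

theorem appendZeroCol_mulVec (v : Fin (n + 1) → ℝ) :
    appendZeroCol W *ᵥ v = W *ᵥ fun i => v i.castSucc := by
  ext k
  simp [mulVec, dotProduct, appendZeroCol, Fin.sum_univ_castSucc]

end AppendZeroCol

theorem joint_posterior_train_test_skewGP_general (n m : ℕ)
    (ξhat : Fin (n + 1) → ℝ) (Ωhat : Matrix (Fin (n + 1)) (Fin (n + 1)) ℝ)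
    (hΩhat : Ωhat.PosDef) (W : Matrix (Fin m) (Fin n) ℝ)
    (ξ : Fin n → ℝ) (hξ : ξ = fun i => ξhat i.castSucc)
    (Ω : Matrix (Fin n) (Fin n) ℝ) (hΩ : Ω = Ωhat.submatrix Fin.castSucc Fin.castSucc) :
    (∀ ghat : Fin (n + 1) → ℝ,
      gaussCdf (1 : Matrix (Fin m) (Fin m) ℝ) ((appendZeroCol W).mulVec ghat) *
          gaussPdf Ωhat (ghat - ξhat) =
        gaussCdf (W * Ω * Wᵀ + 1) (W.mulVec ξ) *
          sunPdf ξhat Ωhat (matCorr Ωhat * matD Ωhat * (appendZeroCol W)ᵀ)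
            (W.mulVec ξ) (W * Ω * Wᵀ + 1) ghat) ∧
    (∀ k : Fin m,
      (matCorr Ωhat * matD Ωhat * (appendZeroCol W)ᵀ) (Fin.last n) k =
        (∑ j : Fin n, Ωhat (Fin.last n) j.castSucc * W k j) /
          Real.sqrt (Ωhat (Fin.last n) (Fin.last n))) := by
  subst hξ hΩ
  refine ⟨fun ghat => ?_, fun k => ?_⟩
  · rw [← appendZeroCol_mul_mul_transpose, ← appendZeroCol_mulVec]
    exact gaussCdf_mulVec_mul_gaussPdf_eq_mul_sunPdf hΩhat _ PosDef.one ξhat ghat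
  · rw [matCorr_mul_matD_mul_apply hΩhat, mul_transpose_appendZeroCol]
    simp [mul_apply]

/-- joint posterior of training and test latent values under the affine probit
likelihood with `Ŵ = [W | 0]` is the `SUN_{n+1,m}(ξ̂, Ω̂, Ω̂̄ D_{Ω̂} Ŵᵀ, W ξ, W Ω Wᵀ + I_m)`
density (up to the normalizing constant `Φ_m(W ξ; W Ω Wᵀ + I_m)`); moreover the skewness
matrix `Ω̂̄ D_{Ω̂} Ŵᵀ` has last row `Ω̂_{n+1,1:n} Wᵀ / √(Ω̂_{n+1,n+1})`, and the parameters
`γ = W ξ`, `Γ = W Ω Wᵀ + I_m` do not depend on the test point. -/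
theorem joint_posterior_train_test_skewGP (n m : ℕ) (hn : 1 ≤ n) (hm : 1 ≤ m)
    (ξhat : Fin (n + 1) → ℝ) (Ωhat : Matrix (Fin (n + 1)) (Fin (n + 1)) ℝ)
    (hΩhat : Ωhat.PosDef) (W : Matrix (Fin m) (Fin n) ℝ)
    (ξ : Fin n → ℝ) (hξ : ξ = fun i => ξhat i.castSucc)
    (Ω : Matrix (Fin n) (Fin n) ℝ) (hΩ : Ω = Ωhat.submatrix Fin.castSucc Fin.castSucc) :
    (∀ ghat : Fin (n + 1) → ℝ,
      gaussCdf (1 : Matrix (Fin m) (Fin m) ℝ) ((appendZeroCol W).mulVec ghat) *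
          gaussPdf Ωhat (ghat - ξhat) =
        gaussCdf (W * Ω * Wᵀ + 1) (W.mulVec ξ) *
          sunPdf ξhat Ωhat (matCorr Ωhat * matD Ωhat * (appendZeroCol W)ᵀ)
            (W.mulVec ξ) (W * Ω * Wᵀ + 1) ghat) ∧
    (∀ k : Fin m,
      (matCorr Ωhat * matD Ωhat * (appendZeroCol W)ᵀ) (Fin.last n) k =
        (∑ j : Fin n, Ωhat (Fin.last n) j.castSucc * W k j) /
          Real.sqrt (Ωhat (Fin.last n) (Fin.last n))) :=
  joint_posterior_train_test_skewGP_general n m ξhat Ωhat hΩhat W ξ hξ Ω hΩ
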